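/- arXiv:1511.09456 — 3 statements merged into one kernel-verified Lean document; each statement's English description precedes it below -/
import Mathlib

section
/- Let (X,d,μ) be a space of homogeneous type and r(·): X → [0,∞) log-Hölder continuous at infinity with base point x₀, constants C_∞, r_∞ > 0. With R(x) = (e+d(x,x₀))^{-N}, N r_∞ > log₂ C_μ, for every measurable set E and every measurable F with 0 ≤ F ≤ 1 a.e. on E: ∫_E F(y)^{r(y)} dμ(y) ≤ e^{N C_∞} ∫_E F(y)^{r_∞} dμ(y) + e^{N C_∞} ∫_E R(y)^{r_∞} dμ(y). -/
open MeasureTheory ENNReal Filter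

/-- Quasi-metric ball. -/
def qball {X : Type*} (d : X → X → ℝ) (x : X) (r : ℝ) : Set X := {y | d x y < r}

/-- `(X,d)` is a quasi-metric space with quasi-metric constant `A₀`. -/
def IsQuasiMetric {X : Type*} (d : X → X → ℝ) (A₀ : ℝ) : Prop :=
  1 ≤ A₀ ∧ (∀ x y, 0 ≤ d x y) ∧ (∀ x y, d x y = 0 ↔ x = y) ∧ (∀ x y, d x y = d y x) ∧
    ∀ x y z, d x y ≤ A₀ * (d x z + d y z)

/-- `μ` is doubling with doubling constant `Cμ` for quasi-metric balls. -/
def IsDoubling {X : Type*} [MeasurableSpace X] (d : X → X → ℝ) (μ : MeasureTheory.Measure X)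
    (Cμ : ℝ) : Prop :=
  1 ≤ Cμ ∧ ∀ x r, 0 < r → μ (qball d x (2 * r)) ≤ ENNReal.ofReal Cμ * μ (qball d x r)

/-- All quasi-metric balls have positive finite measure. -/
def BallsFinite {X : Type*} [MeasurableSpace X] (d : X → X → ℝ)
    (μ : MeasureTheory.Measure X) : Prop :=
  ∀ x r, 0 < r → 0 < μ (qball d x r) ∧ μ (qball d x r) < ⊤

/-- Reverse doubling: `μ(B(x,r/2)) ≤ γ μ(B(x,r))` whenever `B(x,r) ⊊ X`. -/
def IsReverseDoubling {X : Type*} [MeasurableSpace X] (d : X → X → ℝ)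
    (μ : MeasureTheory.Measure X) (γ : ℝ) : Prop :=
  0 < γ ∧ γ < 1 ∧ ∀ x r, 0 < r → qball d x r ≠ Set.univ →
    μ (qball d x (r / 2)) ≤ ENNReal.ofReal γ * μ (qball d x r)

/-- The fractional maximal operator `M_η`. -/
noncomputable def fracMax {X : Type*} [MeasurableSpace X] (d : X → X → ℝ)
    (μ : MeasureTheory.Measure X) (η : ℝ) (f : X → ℝ) (x : X) : ℝ≥0∞ :=
  ⨆ (z : X) (r : ℝ) (_ : 0 < r) (_ : x ∈ qball d z r),
    μ (qball d z r) ^ η * ((μ (qball d z r))⁻¹ * ∫⁻ y in qball d z r, ENNReal.ofReal |f y| ∂μ)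

/-- A dyadic grid on a space of homogeneous type (Hytönen–Kairema). -/
def IsDyadicGrid {X : Type*} [MeasurableSpace X] (d : X → X → ℝ)
    (μ : MeasureTheory.Measure X) (𝒟 : ℤ → Set (Set X)) : Prop :=
  ∃ (C δ ε : ℝ) (xc : Set X → X), 0 < C ∧ 0 < δ ∧ δ < 1 ∧ 0 < ε ∧ ε < 1 ∧
    (∀ k, (𝒟 k).PairwiseDisjoint id ∧ ⋃₀ 𝒟 k = Set.univ) ∧
    (∀ k l, ∀ Q₁ ∈ 𝒟 k, ∀ Q₂ ∈ 𝒟 l, Q₁ ∩ Q₂ = ∅ ∨ Q₁ ⊆ Q₂ ∨ Q₂ ⊆ Q₁) ∧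
    (∀ k, ∀ Q₁ ∈ 𝒟 k, ∃ Q₂ ∈ 𝒟 (k + 1), Q₂ ⊆ Q₁) ∧
    (∀ k, ∀ Q₁ ∈ 𝒟 k, ∃! Q₃, Q₃ ∈ 𝒟 (k - 1) ∧ Q₁ ⊆ Q₃) ∧
    (∀ k, ∀ Q₁ ∈ 𝒟 k, ∀ Q₂ ∈ 𝒟 (k + 1), Q₂ ⊆ Q₁ → ENNReal.ofReal ε * μ Q₁ ≤ μ Q₂) ∧
    (∀ k, ∀ Q ∈ 𝒟 k, MeasurableSet Q ∧
      qball d (xc Q) (δ ^ k) ⊆ Q ∧ Q ⊆ qball d (xc Q) (C * δ ^ k))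

/-- The dyadic fractional maximal operator `M^𝒟_η`. -/
noncomputable def dyadicFracMax {X : Type*} [MeasurableSpace X]
    (μ : MeasureTheory.Measure X) (𝒟 : ℤ → Set (Set X)) (η : ℝ) (f : X → ℝ) (x : X) : ℝ≥0∞ :=
  ⨆ (k : ℤ) (Q ∈ 𝒟 k) (_ : x ∈ Q),
    μ Q ^ η * ((μ Q)⁻¹ * ∫⁻ y in Q, ENNReal.ofReal |f y| ∂μ)

/-- Local log-Hölder continuity with constant `C₀`. -/
def LH0 {X : Type*} (d : X → X → ℝ) (r : X → ℝ) (C₀ : ℝ) : Prop :=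
  ∀ x y, d x y < 1 / 2 → |r x - r y| ≤ -C₀ / Real.log (d x y)

/-- Log-Hölder continuity at infinity with base point `x₀`, constant `Cinf`, limit `rinf`. -/
def LHinf {X : Type*} (d : X → X → ℝ) (r : X → ℝ) (x₀ : X) (Cinf rinf : ℝ) : Prop :=
  ∀ x, |r x - rinf| ≤ Cinf / Real.log (Real.exp 1 + d x x₀)

/-- The modular of the variable Lebesgue space `L^{p(·)}`. -/
noncomputable def vModular {X : Type*} [MeasurableSpace X] (μ : MeasureTheory.Measure X)
    (p : X → ℝ≥0∞) (g : X → ℝ≥0∞) (lam : ℝ≥0∞) : ℝ≥0∞ :=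
  (∫⁻ x in {x | p x ≠ ⊤}, (g x / lam) ^ (p x).toReal ∂μ)
    + lam⁻¹ * essSup g (μ.restrict {x | p x = ⊤})

/-- The Luxemburg norm of the variable Lebesgue space `L^{p(·)}`. -/
noncomputable def vNorm {X : Type*} [MeasurableSpace X] (μ : MeasureTheory.Measure X)
    (p : X → ℝ≥0∞) (g : X → ℝ≥0∞) : ℝ≥0∞ :=
  sInf {lam : ℝ≥0∞ | 0 < lam ∧ vModular μ p g lam ≤ 1}

/-- The fractional integral operator (Riesz potential) `I_η`, applied to `|f|`. -/
noncomputable def fracInt {X : Type*} [MeasurableSpace X] (d : X → X → ℝ)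
    (μ : MeasureTheory.Measure X) (η : ℝ) (f : X → ℝ) (x : X) : ℝ≥0∞ :=
  ∫⁻ y, ENNReal.ofReal |f y| / μ (qball d x (d x y)) ^ (1 - η) ∂μ

/-- Replacing a variable exponent by its limit at infinity, second direction. -/
theorem stmt6 {X : Type*} [MeasurableSpace X] (d : X → X → ℝ) (μ : MeasureTheory.Measure X)
    (A₀ Cμ : ℝ) (hqm : IsQuasiMetric d A₀) (hdb : IsDoubling d μ Cμ) (hb : BallsFinite d μ)
    (r : X → ℝ) (hr0 : ∀ x, 0 ≤ r x) (x₀ : X) (Cinf rinf N : ℝ)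
    (hLH : LHinf d r x₀ Cinf rinf) (hrinf : 0 < rinf) (hN : Real.logb 2 Cμ < N * rinf)
    (E : Set X) (hE : MeasurableSet E) (F : X → ℝ) (hF : Measurable F)
    (hF01 : ∀ᵐ y ∂μ.restrict E, 0 ≤ F y ∧ F y ≤ 1) :
    ∫⁻ y in E, ENNReal.ofReal (F y ^ r y) ∂μ ≤
      ENNReal.ofReal (Real.exp (N * Cinf)) * ∫⁻ y in E, ENNReal.ofReal (F y ^ rinf) ∂μ
        + ENNReal.ofReal (Real.exp (N * Cinf))
            * ∫⁻ y in E, ENNReal.ofReal (((Real.exp 1 + d y x₀) ^ (-N)) ^ rinf) ∂μ := by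
  have hd0 := hqm.2.1
  have hCμ : 1 ≤ Cμ := hdb.1
  have hNpos : 0 < N := by
    have h0 : (0:ℝ) ≤ Real.logb 2 Cμ := Real.logb_nonneg (by norm_num) hCμ
    nlinarith
  set A : ℝ := Real.exp (N * Cinf) with hA
  -- basic facts about D y := e + d y x₀
  have hDpos : ∀ y, (0:ℝ) < Real.exp 1 + d y x₀ := fun y => by
    have := hd0 y x₀; positivity
  have hlogD : ∀ y, 1 ≤ Real.log (Real.exp 1 + d y x₀) := fun y => by
    have h1 : Real.exp 1 ≤ Real.exp 1 + d y x₀ := by linarith [hd0 y x₀]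
    calc (1:ℝ) = Real.log (Real.exp 1) := (Real.log_exp 1).symm
      _ ≤ Real.log (Real.exp 1 + d y x₀) := Real.log_le_log (Real.exp_pos 1) h1
  have hCinf : 0 ≤ Cinf := by
    have h := hLH x₀
    have h2 := hlogD x₀
    have h3 := abs_nonneg (r x₀ - rinf)
    have h4 : (0:ℝ) ≤ Cinf / Real.log (Real.exp 1 + d x₀ x₀) := le_trans h3 h
    by_contra hcon
    push_neg at hcon
    have : Cinf / Real.log (Real.exp 1 + d x₀ x₀) < 0 :=
      div_neg_of_neg_of_pos hcon (by linarith)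
    linarith
  have hA1 : 1 ≤ A := Real.one_le_exp (by positivity)
  -- the key pointwise inequality
  have key : ∀ y, 0 ≤ F y → F y ≤ 1 →
      F y ^ r y ≤ A * F y ^ rinf + A * ((Real.exp 1 + d y x₀) ^ (-N)) ^ rinf := by
    intro y hy0 hy1
    set D : ℝ := Real.exp 1 + d y x₀ with hD
    have hDp : 0 < D := hDpos y
    have hlD : 1 ≤ Real.log D := hlogD y
    have hRpos : 0 < D ^ (-N) := Real.rpow_pos_of_pos hDp _
    have habs : |r y - rinf| * Real.log D ≤ Cinf := by
      have := hLH y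
      rw [le_div_iff₀ (by linarith : (0:ℝ) < Real.log D)] at this
      exact this
    have hkey : (D ^ (-N)) ^ (r y - rinf) ≤ A := by
      rw [← Real.rpow_mul hDp.le, Real.rpow_def_of_pos hDp, hA]
      apply Real.exp_le_exp.mpr
      have h1 : -(r y - rinf) ≤ |r y - rinf| := neg_le_abs _
      nlinarith [abs_nonneg (r y - rinf), mul_le_mul_of_nonneg_left habs hNpos.le,
        mul_le_mul_of_nonneg_right h1 (by linarith : (0:ℝ) ≤ Real.log D)]
    have hF0 : (0:ℝ) ≤ F y ^ rinf := Real.rpow_nonneg hy0 _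
    have hR0 : (0:ℝ) ≤ (D ^ (-N)) ^ rinf := Real.rpow_nonneg hRpos.le _
    rcases le_or_gt (F y) (D ^ (-N)) with hc | hc
    · have h1 : F y ^ r y ≤ (D ^ (-N)) ^ r y := Real.rpow_le_rpow hy0 hc (hr0 y)
      have h2 : (D ^ (-N)) ^ r y = (D ^ (-N)) ^ rinf * (D ^ (-N)) ^ (r y - rinf) := by
        rw [← Real.rpow_add hRpos]; ring_nf
      have h3 : (D ^ (-N)) ^ rinf * (D ^ (-N)) ^ (r y - rinf) ≤ A * (D ^ (-N)) ^ rinf := by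
        calc (D ^ (-N)) ^ rinf * (D ^ (-N)) ^ (r y - rinf)
            ≤ (D ^ (-N)) ^ rinf * A := mul_le_mul_of_nonneg_left hkey hR0
          _ = A * (D ^ (-N)) ^ rinf := mul_comm _ _
      nlinarith [mul_nonneg (by linarith : (0:ℝ) ≤ A) hF0]
    · have htpos : 0 < F y := lt_trans hRpos hc
      have h2 : F y ^ r y = F y ^ rinf * F y ^ (r y - rinf) := by
        rw [← Real.rpow_add htpos]; ring_nf
      have h3 : F y ^ (r y - rinf) ≤ A := by
        rcases le_or_gt rinf (r y) with h | h
        · have := Real.rpow_le_one hy0 hy1 (by linarith : 0 ≤ r y - rinf)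
          linarith
        · exact (Real.rpow_le_rpow_of_nonpos hRpos hc.le
            (by linarith : r y - rinf ≤ 0)).trans hkey
      have h4 : F y ^ rinf * F y ^ (r y - rinf) ≤ A * F y ^ rinf := by
        calc F y ^ rinf * F y ^ (r y - rinf)
            ≤ F y ^ rinf * A := mul_le_mul_of_nonneg_left h3 hF0
          _ = A * F y ^ rinf := mul_comm _ _
      nlinarith [mul_nonneg (by linarith : (0:ℝ) ≤ A) hR0]
  -- pass to ENNReal pointwise
  have keyE : ∀ᵐ y ∂μ.restrict E, ENNReal.ofReal (F y ^ r y) ≤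
      ENNReal.ofReal A * ENNReal.ofReal (F y ^ rinf)
        + ENNReal.ofReal A * ENNReal.ofReal (((Real.exp 1 + d y x₀) ^ (-N)) ^ rinf) := by
    filter_upwards [hF01] with y hy
    have h := key y hy.1 hy.2
    calc ENNReal.ofReal (F y ^ r y)
        ≤ ENNReal.ofReal (A * F y ^ rinf + A * ((Real.exp 1 + d y x₀) ^ (-N)) ^ rinf) :=
          ENNReal.ofReal_le_ofReal h
      _ ≤ ENNReal.ofReal (A * F y ^ rinf)
            + ENNReal.ofReal (A * ((Real.exp 1 + d y x₀) ^ (-N)) ^ rinf) :=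
          ENNReal.ofReal_add_le
      _ = ENNReal.ofReal A * ENNReal.ofReal (F y ^ rinf)
            + ENNReal.ofReal A * ENNReal.ofReal (((Real.exp 1 + d y x₀) ^ (-N)) ^ rinf) := by
          rw [ENNReal.ofReal_mul (by linarith), ENNReal.ofReal_mul (by linarith)]
  have hmeas : Measurable fun y =>
      ENNReal.ofReal A * ENNReal.ofReal (F y ^ rinf) :=
    measurable_const.mul (ENNReal.measurable_ofReal.comp
      ((Real.continuous_rpow_const hrinf.le).measurable.comp hF))
  calc ∫⁻ y in E, ENNReal.ofReal (F y ^ r y) ∂μ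
      ≤ ∫⁻ y in E, (ENNReal.ofReal A * ENNReal.ofReal (F y ^ rinf)
          + ENNReal.ofReal A * ENNReal.ofReal (((Real.exp 1 + d y x₀) ^ (-N)) ^ rinf)) ∂μ :=
        lintegral_mono_ae keyE
    _ = ENNReal.ofReal A * ∫⁻ y in E, ENNReal.ofReal (F y ^ rinf) ∂μ
          + ENNReal.ofReal A
            * ∫⁻ y in E, ENNReal.ofReal (((Real.exp 1 + d y x₀) ^ (-N)) ^ rinf) ∂μ := by
        rw [lintegral_add_left hmeas, lintegral_const_mul' _ _ ENNReal.ofReal_ne_top,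
          lintegral_const_mul' _ _ ENNReal.ofReal_ne_top]
end

section
/- Let D be a dyadic grid on a space of homogeneous type (X,d,μ) and fix 0 < η < 1. Set s = 1/(1−η). Then M^D_η satisfies the weak (1,s) inequality: for every f ∈ L¹(X) and every t > 0, t · μ({x ∈ X : M^D_η f(x) > t})^{1/s} ≤ ‖f‖_{L¹(X)}. -/
open MeasureTheory ENNReal Filter

/-! Call a dyadic cube `Q` bad if `t μ(Q)^(1-η) < ∫_Q |f|`; the superlevel set of `M^𝒟_η f` is the
union of the bad cubes. Maximal bad cubes need not exist, so each point `x` of this union is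
replaced by the union `U x` of all bad cubes containing `x`. These cubes form a countable chain, so
`μ(U x)` is the supremum of their measures and `t μ(U x)^(1-η) ≤ ∫_{U x} |f|`. Any two sets `U x`
are equal or disjoint, hence by subadditivity of `a ↦ a^(1-η)` every finite subfamily satisfies
`t (Σ μ(U xᵢ))^(1-η) ≤ Σ ∫_{U xᵢ} |f| ≤ ‖f‖₁`; disjointness also makes the family countable,
and taking the supremum over finite subfamilies gives the weak-type bound. -/
open Set

namespace ENNReal

theorem rpow_sum_le_sum_rpow {ι : Type*} (s : Finset ι) (a : ι → ℝ≥0∞) {p : ℝ}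
    (hp0 : 0 < p) (hp1 : p ≤ 1) : (∑ i ∈ s, a i) ^ p ≤ ∑ i ∈ s, a i ^ p := by
  classical
  induction s using Finset.induction_on with
  | empty => simp [zero_rpow_of_pos hp0]
  | insert i s hi ih =>
    rw [Finset.sum_insert hi, Finset.sum_insert hi]
    exact (rpow_add_le_add_rpow _ _ hp0.le hp1).trans (add_le_add_right ih _)

theorem mul_iSup_rpow_le {ι : Sort*} {a : ι → ℝ≥0∞} {b c : ℝ≥0∞} {p : ℝ} (hp : 0 < p)
    (h : ∀ i, c * a i ^ p ≤ b) : c * (⨆ i, a i) ^ p ≤ b := by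
  have hsup : (⨆ i, a i) ^ p = ⨆ i, a i ^ p := (orderIsoRpow p hp).map_iSup a
  rw [hsup, mul_iSup]
  exact iSup_le h

theorem lt_rpow_mul_inv_mul_iff {a b c : ℝ≥0∞} {η : ℝ} (ha0 : a ≠ 0) (ha : a ≠ ⊤) :
    c < a ^ η * (a⁻¹ * b) ↔ c * a ^ (1 - η) < b := by
  have hinv : a ^ η * a⁻¹ = (a ^ (1 - η))⁻¹ := by
    rw [← rpow_neg_one, ← rpow_add _ _ ha0 ha, ← rpow_neg, neg_sub, sub_eq_add_neg]
  rw [← mul_assoc, hinv, mul_comm, ← div_eq_mul_inv]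
  exact ENNReal.lt_div_iff_mul_lt (Or.inl (rpow_pos (pos_iff_ne_zero.2 ha0) ha).ne')
    (Or.inl (rpow_ne_top_of_nonneg' (pos_iff_ne_zero.2 ha0) ha))

end ENNReal

def IsLaminar {X : Type*} (𝒞 : Set (Set X)) : Prop :=
  ∀ Q ∈ 𝒞, ∀ Q' ∈ 𝒞, Disjoint Q Q' ∨ Q ⊆ Q' ∨ Q' ⊆ Q

def unionContaining {X : Type*} (𝒞 : Set (Set X)) (x : X) : Set X :=
  ⋃₀ {Q ∈ 𝒞 | x ∈ Q}

section Laminar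

variable {X : Type*} {𝒞 : Set (Set X)}

theorem mem_unionContaining {x : X} (hx : x ∈ ⋃₀ 𝒞) : x ∈ unionContaining 𝒞 x := by
  obtain ⟨Q, hQ, hxQ⟩ := hx
  exact ⟨Q, ⟨hQ, hxQ⟩, hxQ⟩

theorem subset_unionContaining {x : X} {Q : Set X} (hQ : Q ∈ 𝒞) (hx : x ∈ Q) :
    Q ⊆ unionContaining 𝒞 x :=
  subset_sUnion_of_mem ⟨hQ, hx⟩

theorem sUnion_image_unionContaining : ⋃₀ (unionContaining 𝒞 '' ⋃₀ 𝒞) = ⋃₀ 𝒞 := by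
  refine Subset.antisymm ?_ fun x hx => ⟨_, mem_image_of_mem _ hx, mem_unionContaining hx⟩
  rintro y ⟨_, ⟨x, -, rfl⟩, Q, ⟨hQ, -⟩, hyQ⟩
  exact ⟨Q, hQ, hyQ⟩

namespace IsLaminar

theorem mono {𝒞' : Set (Set X)} (h : IsLaminar 𝒞) (h' : 𝒞' ⊆ 𝒞) : IsLaminar 𝒞' :=
  fun Q hQ Q' hQ' => h Q (h' hQ) Q' (h' hQ')

theorem isChain_containing (h : IsLaminar 𝒞) (x : X) : IsChain (· ⊆ ·) {Q ∈ 𝒞 | x ∈ Q} := by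
  rintro Q ⟨hQ, hxQ⟩ Q' ⟨hQ', hxQ'⟩ -
  exact (h Q hQ Q' hQ').resolve_left (not_disjoint_iff.2 ⟨x, hxQ, hxQ'⟩)

theorem unionContaining_subset (h : IsLaminar 𝒞) {R : Set X} (hR : R ∈ 𝒞) {x y : X}
    (hx : x ∈ R) (hy : y ∈ R) : unionContaining 𝒞 y ⊆ unionContaining 𝒞 x := by
  refine sUnion_subset fun S hS => ?_
  rcases eq_or_ne S R with rfl | hne
  · exact subset_unionContaining hR hx
  rcases h.isChain_containing y hS ⟨hR, hy⟩ hne with hSR | hRS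
  · exact hSR.trans (subset_unionContaining hR hx)
  · exact subset_unionContaining hS.1 (hRS hx)

theorem unionContaining_eq_or_disjoint (h : IsLaminar 𝒞) (x y : X) :
    unionContaining 𝒞 x = unionContaining 𝒞 y ∨
      Disjoint (unionContaining 𝒞 x) (unionContaining 𝒞 y) := by
  refine or_iff_not_imp_right.2 fun hxy => ?_
  obtain ⟨z, ⟨Q, ⟨hQ, hxQ⟩, hzQ⟩, ⟨Q', ⟨hQ', hyQ'⟩, hzQ'⟩⟩ := not_disjoint_iff.1 hxy
  -- the larger of two members through `z` contains both `x` and `y`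
  rcases (h Q hQ Q' hQ').resolve_left (not_disjoint_iff.2 ⟨z, hzQ, hzQ'⟩) with hQQ' | hQ'Q
  · exact (h.unionContaining_subset hQ' hyQ' (hQQ' hxQ)).antisymm
      (h.unionContaining_subset hQ' (hQQ' hxQ) hyQ')
  · exact (h.unionContaining_subset hQ (hQ'Q hyQ') hxQ).antisymm
      (h.unionContaining_subset hQ hxQ (hQ'Q hyQ'))

end IsLaminar

end Laminar

section LaminarMeasure

variable {X : Type*} [MeasurableSpace X] {𝒞 : Set (Set X)}

theorem measurableSet_unionContaining {x : X} (hm : ∀ Q ∈ 𝒞, MeasurableSet Q)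
    (hc : {Q ∈ 𝒞 | x ∈ Q}.Countable) : MeasurableSet (unionContaining 𝒞 x) :=
  .sUnion hc fun Q hQ => hm Q hQ.1

theorem IsLaminar.measure_unionContaining (h : IsLaminar 𝒞) (μ : Measure X) {x : X}
    (hc : {Q ∈ 𝒞 | x ∈ Q}.Countable) :
    μ (unionContaining 𝒞 x) = ⨆ Q : {Q ∈ 𝒞 | x ∈ Q}, μ Q := by
  have := hc.to_subtype
  rw [unionContaining, sUnion_eq_iUnion]
  exact (h.isChain_containing x).directedOn.directed_val.measure_iUnion

theorem IsLaminar.mul_measure_unionContaining_rpow_le (h : IsLaminar 𝒞) {μ ν : Measure X}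
    {c : ℝ≥0∞} {p : ℝ} (hp : 0 < p) {x : X} (hc : {Q ∈ 𝒞 | x ∈ Q}.Countable)
    (hν : ∀ Q ∈ 𝒞, c * μ Q ^ p ≤ ν Q) :
    c * μ (unionContaining 𝒞 x) ^ p ≤ ν (unionContaining 𝒞 x) := by
  rw [h.measure_unionContaining μ hc]
  exact ENNReal.mul_iSup_rpow_le hp fun Q =>
    (hν Q Q.2.1).trans (measure_mono (subset_unionContaining Q.2.1 Q.2.2))

theorem IsLaminar.mul_measure_sUnion_rpow_le (h : IsLaminar 𝒞) {μ ν : Measure X}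
    {c : ℝ≥0∞} {p : ℝ} (hp0 : 0 < p) (hp1 : p ≤ 1) (hm : ∀ Q ∈ 𝒞, MeasurableSet Q)
    (hc : ∀ x, {Q ∈ 𝒞 | x ∈ Q}.Countable) (hν : ∀ Q ∈ 𝒞, c * μ Q ^ p < ν Q) :
    c * μ (⋃₀ 𝒞) ^ p ≤ ν univ := by
  rcases eq_or_ne (ν univ) ⊤ with hν_top | hν_top
  · exact hν_top ▸ le_top
  set 𝒮 := unionContaining 𝒞 '' ⋃₀ 𝒞
  have h𝒮_meas : ∀ A ∈ 𝒮, MeasurableSet A := by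
    rintro _ ⟨x, -, rfl⟩
    exact measurableSet_unionContaining hm (hc x)
  have h𝒮_disj : 𝒮.PairwiseDisjoint id := by
    rintro _ ⟨x, -, rfl⟩ _ ⟨y, -, rfl⟩ hxy
    exact (h.unionContaining_eq_or_disjoint x y).resolve_left hxy
  have h𝒮_bound : ∀ A ∈ 𝒮, c * μ A ^ p ≤ ν A := by
    rintro _ ⟨x, -, rfl⟩
    exact h.mul_measure_unionContaining_rpow_le hp0 (hc x) fun Q hQ => (hν Q hQ).le
  have h𝒮_pos : ∀ A ∈ 𝒮, 0 < ν A := by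
    rintro _ ⟨x, ⟨Q, hQ, hxQ⟩, rfl⟩
    exact pos_of_gt ((hν Q hQ).trans_le (measure_mono (subset_unionContaining hQ hxQ)))
  have h𝒮_countable : 𝒮.Countable := by
    have hpos := Measure.countable_meas_pos_of_disjoint_of_meas_iUnion_ne_top ν
      (As := fun A : 𝒮 => (A : Set X)) (fun A => h𝒮_meas A A.2)
      (fun A B hAB => h𝒮_disj A.2 B.2 (Subtype.coe_ne_coe.2 hAB))
      (ne_top_of_le_ne_top hν_top (measure_mono (subset_univ _)))
    rw [← countable_coe_iff, ← countable_univ_iff]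
    exact hpos.mono fun A _ => h𝒮_pos A A.2
  rw [← sUnion_image_unionContaining, measure_sUnion h𝒮_countable h𝒮_disj h𝒮_meas,
    ENNReal.tsum_eq_iSup_sum]
  refine ENNReal.mul_iSup_rpow_le hp0 fun F => ?_
  calc c * (∑ A ∈ F, μ A) ^ p
      ≤ c * ∑ A ∈ F, μ A ^ p := by gcongr; exact ENNReal.rpow_sum_le_sum_rpow _ _ hp0 hp1
    _ = ∑ A ∈ F, c * μ A ^ p := Finset.mul_sum _ _ _
    _ ≤ ∑ A ∈ F, ν A := Finset.sum_le_sum fun A _ => h𝒮_bound A A.2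
    _ = ν (⋃ A ∈ F, (A : Set X)) :=
      (measure_biUnion_finset (f := fun A : 𝒮 => (A : Set X))
        (fun A _ B _ hAB => h𝒮_disj A.2 B.2 (Subtype.coe_ne_coe.2 hAB))
        fun A _ => h𝒮_meas A A.2).symm
    _ ≤ ν univ := measure_mono (subset_univ _)

end LaminarMeasure

namespace IsDyadicGrid

variable {X : Type*} [MeasurableSpace X] {d : X → X → ℝ} {μ : Measure X}
  {𝒟 : ℤ → Set (Set X)} {Q : Set X}

theorem measurableSet (h : IsDyadicGrid d μ 𝒟) (hQ : Q ∈ ⋃ k, 𝒟 k) : MeasurableSet Q := by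
  obtain ⟨_, _, _, _, _, _, _, _, _, _, _, _, _, _, hcube⟩ := h
  obtain ⟨k, hk⟩ := mem_iUnion.1 hQ
  exact (hcube k Q hk).1

theorem measure_pos (h : IsDyadicGrid d μ 𝒟) (hb : BallsFinite d μ) (hQ : Q ∈ ⋃ k, 𝒟 k) :
    0 < μ Q := by
  obtain ⟨_, δ, _, _, _, hδ, _, _, _, _, _, _, _, _, hcube⟩ := h
  obtain ⟨k, hk⟩ := mem_iUnion.1 hQ
  exact (hb _ _ (zpow_pos hδ k)).1.trans_le (measure_mono (hcube k Q hk).2.1)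

theorem measure_ne_top (h : IsDyadicGrid d μ 𝒟) (hb : BallsFinite d μ) (hQ : Q ∈ ⋃ k, 𝒟 k) :
    μ Q ≠ ⊤ := by
  obtain ⟨C, δ, _, _, hC, hδ, _, _, _, _, _, _, _, _, hcube⟩ := h
  obtain ⟨k, hk⟩ := mem_iUnion.1 hQ
  exact ne_top_of_le_ne_top (hb _ _ (mul_pos hC (zpow_pos hδ k))).2.ne
    (measure_mono (hcube k Q hk).2.2)

theorem isLaminar (h : IsDyadicGrid d μ 𝒟) : IsLaminar (⋃ k, 𝒟 k) := by
  obtain ⟨_, _, _, _, _, _, _, _, _, _, hnest, -⟩ := h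
  intro Q hQ Q' hQ'
  obtain ⟨k, hk⟩ := mem_iUnion.1 hQ
  obtain ⟨k', hk'⟩ := mem_iUnion.1 hQ'
  rw [disjoint_iff_inter_eq_empty]
  exact hnest k k' Q hk Q' hk'

theorem countable_containing (h : IsDyadicGrid d μ 𝒟) (x : X) :
    {Q ∈ ⋃ k, 𝒟 k | x ∈ Q}.Countable := by
  obtain ⟨_, _, _, _, _, _, _, _, _, hpart, -⟩ := h
  have hsub : {Q ∈ ⋃ k, 𝒟 k | x ∈ Q} ⊆ ⋃ k, {Q ∈ 𝒟 k | x ∈ Q} := by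
    rintro Q ⟨hQ, hxQ⟩
    obtain ⟨k, hk⟩ := mem_iUnion.1 hQ
    exact mem_iUnion.2 ⟨k, hk, hxQ⟩
  refine (countable_iUnion fun k => Subsingleton.countable ?_).mono hsub
  rintro Q ⟨hQ, hxQ⟩ Q' ⟨hQ', hxQ'⟩
  by_contra hne
  exact (hpart k).1 hQ hQ' hne |>.ne_of_mem hxQ hxQ' rfl

end IsDyadicGrid

theorem setOf_lt_dyadicFracMax {X : Type*} [MeasurableSpace X] {d : X → X → ℝ} {μ : Measure X}
    {𝒟 : ℤ → Set (Set X)} (h𝒟 : IsDyadicGrid d μ 𝒟) (hb : BallsFinite d μ) (η : ℝ)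
    (f : X → ℝ) (c : ℝ≥0∞) :
    {x | c < dyadicFracMax μ 𝒟 η f x} =
      ⋃₀ {Q ∈ ⋃ k, 𝒟 k | c * μ Q ^ (1 - η) < ∫⁻ y in Q, ENNReal.ofReal |f y| ∂μ} := by
  ext x
  simp only [mem_ofPred_eq, dyadicFracMax, lt_iSup_iff, mem_sUnion, mem_iUnion]
  constructor
  · rintro ⟨k, Q, hQ, hxQ, hlt⟩
    have hQ' : Q ∈ ⋃ k, 𝒟 k := mem_iUnion.2 ⟨k, hQ⟩
    exact ⟨Q, ⟨⟨k, hQ⟩, (ENNReal.lt_rpow_mul_inv_mul_iff (h𝒟.measure_pos hb hQ').ne'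
      (h𝒟.measure_ne_top hb hQ')).1 hlt⟩, hxQ⟩
  · rintro ⟨Q, ⟨⟨k, hQ⟩, hlt⟩, hxQ⟩
    have hQ' : Q ∈ ⋃ k, 𝒟 k := mem_iUnion.2 ⟨k, hQ⟩
    exact ⟨k, Q, hQ, hxQ, (ENNReal.lt_rpow_mul_inv_mul_iff (h𝒟.measure_pos hb hQ').ne'
      (h𝒟.measure_ne_top hb hQ')).2 hlt⟩

theorem stmt10_general {X : Type*} [MeasurableSpace X] (d : X → X → ℝ) (μ : MeasureTheory.Measure X)
    (hb : BallsFinite d μ)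
    (𝒟 : ℤ → Set (Set X)) (h𝒟 : IsDyadicGrid d μ 𝒟)
    (η s : ℝ) (hη0 : 0 < η) (hη1 : η < 1) (hs : s = 1 / (1 - η))
    (f : X → ℝ) :
    ∀ t : ℝ, 0 < t →
      ENNReal.ofReal t * μ {x | ENNReal.ofReal t < dyadicFracMax μ 𝒟 η f x} ^ (1 / s) ≤
        ∫⁻ x, ENNReal.ofReal |f x| ∂μ := by
  intro t _
  set 𝒞 := {Q ∈ ⋃ k, 𝒟 k |
    ENNReal.ofReal t * μ Q ^ (1 - η) < ∫⁻ y in Q, ENNReal.ofReal |f y| ∂μ}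
  have hm : ∀ Q ∈ 𝒞, MeasurableSet Q := fun Q hQ => h𝒟.measurableSet hQ.1
  have hc : ∀ x, {Q ∈ 𝒞 | x ∈ Q}.Countable := fun x =>
    (h𝒟.countable_containing x).mono fun _ => And.imp_left And.left
  have hbad : ∀ Q ∈ 𝒞, ENNReal.ofReal t * μ Q ^ (1 - η) <
      μ.withDensity (fun y => ENNReal.ofReal |f y|) Q := fun Q hQ => by
    rw [withDensity_apply _ (hm Q hQ)]
    exact hQ.2
  have key := (h𝒟.isLaminar.mono (sep_subset _ _)).mul_measure_sUnion_rpow_le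
    (by linarith) (by linarith) hm hc hbad
  rw [withDensity_apply _ MeasurableSet.univ, Measure.restrict_univ] at key
  rwa [setOf_lt_dyadicFracMax h𝒟 hb, hs, one_div_one_div]

/-- Weak `(1, 1/(1-η))` inequality for the dyadic fractional maximal operator. -/
theorem stmt10 {X : Type*} [MeasurableSpace X] (d : X → X → ℝ) (μ : MeasureTheory.Measure X)
    (A₀ Cμ : ℝ) (hqm : IsQuasiMetric d A₀) (hdb : IsDoubling d μ Cμ) (hb : BallsFinite d μ)
    (𝒟 : ℤ → Set (Set X)) (h𝒟 : IsDyadicGrid d μ 𝒟)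
    (η s : ℝ) (hη0 : 0 < η) (hη1 : η < 1) (hs : s = 1 / (1 - η))
    (f : X → ℝ) (hf : MeasureTheory.Integrable f μ) :
    ∀ t : ℝ, 0 < t →
      ENNReal.ofReal t * μ {x | ENNReal.ofReal t < dyadicFracMax μ 𝒟 η f x} ^ (1 / s) ≤
        ∫⁻ x, ENNReal.ofReal |f x| ∂μ :=
  stmt10_general d μ hb 𝒟 h𝒟 η s hη0 hη1 hs f
end

section
/- Let (X,d,μ) be a space of homogeneous type, p(·): X → [1,∞] with 1/p(·) ∈ LH, and D a dyadic grid on X. Then there exists a constant C such that for every dyadic cube Q ∈ D: μ(Q)^{1/p₊(Q) − 1/p₋(Q)} ≤ C, and for all x ∈ Q, μ(Q)^{1/p(x) − 1/p₋(Q)} ≤ C and μ(Q)^{1/p₊(Q) − 1/p(x)} ≤ C. -/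
open MeasureTheory ENNReal Filter

/-! Write `r = 1/p`. For a cube `Q` with `B(c,t) ⊆ Q ⊆ B(c,Ct)`, the gap `1/p₋(Q) - 1/p₊(Q)` is at
most twice any bound for `|r - m|` on `Q`: so it is at most `1`, at most `2|C₀| / log (1/ρ)` when
the diameter bound `ρ = 2A₀Ct` is small (local log-Hölder), and at most
`2|C∞| / log (e + d(c,x₀)/2A₀)` when `Q` is far from `x₀` (log-Hölder at infinity). Iterating
the doubling condition from `B(x₀,1)` gives `log (1/μ(Q)) ≲ 1 + log⁺ ((1 + d(c,x₀)) / t)`, and in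
each regime the gap times this logarithm is bounded. All three exponents lie in `[-gap, 0]`
because every `y ∈ Q`, not only almost every one, has `1/p₊(Q) ≤ r(y) ≤ 1/p₋(Q)`: `r` is
continuous, and every ball around `y` contains, inside `Q`, a whole dyadic cube. -/

open scoped Real

lemma qball_subset_qball {X : Type*} (d : X → X → ℝ) (x : X) {r R : ℝ} (h : r ≤ R) :
    qball d x r ⊆ qball d x R := fun _ hz => lt_of_lt_of_le hz h

namespace IsQuasiMetric

variable {X : Type*} {d : X → X → ℝ} {A₀ : ℝ}

lemma nonneg (hqm : IsQuasiMetric d A₀) (x y : X) : 0 ≤ d x y := hqm.2.1 x y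

lemma mem_qball_self (hqm : IsQuasiMetric d A₀) (x : X) {r : ℝ} (hr : 0 < r) :
    x ∈ qball d x r := by
  simpa [qball, (hqm.2.2.1 x x).2 rfl] using hr

lemma dist_lt_of_mem_qball (hqm : IsQuasiMetric d A₀) {c u v : X} {R : ℝ}
    (hu : u ∈ qball d c R) (hv : v ∈ qball d c R) : d u v < 2 * A₀ * R := by
  obtain ⟨hA₀, -, -, hsymm, htri⟩ := hqm
  have hu' : d u c < R := by rw [hsymm]; exact hu
  have hv' : d v c < R := by rw [hsymm]; exact hv
  calc d u v ≤ A₀ * (d u c + d v c) := htri u v c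
    _ < A₀ * (R + R) := by gcongr
    _ = 2 * A₀ * R := by ring

lemma qball_one_subset (hqm : IsQuasiMetric d A₀) (x₀ c : X) :
    qball d x₀ 1 ⊆ qball d c (A₀ * (d c x₀ + 1)) := by
  obtain ⟨hA₀, -, -, hsymm, htri⟩ := hqm
  intro z (hz : d x₀ z < 1)
  rw [hsymm] at hz
  calc d c z ≤ A₀ * (d c x₀ + d z x₀) := htri c z x₀
    _ < A₀ * (d c x₀ + 1) := by gcongr

lemma div_le_dist_of_subset_qball (hqm : IsQuasiMetric d A₀) {Q : Set X} {c : X} {R : ℝ}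
    (x₀ : X) (hQ : Q ⊆ qball d c R) (hR : 2 * A₀ * R ≤ d c x₀) {w : X} (hw : w ∈ Q) :
    d c x₀ / (2 * A₀) ≤ d w x₀ := by
  obtain ⟨hA₀, -, -, hsymm, htri⟩ := hqm
  have hcw : d c w < R := hQ hw
  have h := htri c x₀ w
  rw [hsymm x₀ w] at h
  rw [div_le_iff₀ (by positivity)]
  nlinarith

end IsQuasiMetric

namespace IsDoubling

variable {X : Type*} [MeasurableSpace X] {d : X → X → ℝ} {μ : Measure X} {Cμ : ℝ}

lemma measure_qball_two_pow_mul_le (hdb : IsDoubling d μ Cμ) (x : X) {r : ℝ} (hr : 0 < r)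
    (m : ℕ) : μ (qball d x (2 ^ m * r)) ≤ ENNReal.ofReal (Cμ ^ m) * μ (qball d x r) := by
  induction m with
  | zero => simp
  | succ n ih =>
    have hCμ : 0 ≤ Cμ := zero_le_one.trans hdb.1
    calc μ (qball d x (2 ^ (n + 1) * r)) = μ (qball d x (2 * (2 ^ n * r))) := by ring_nf
      _ ≤ ENNReal.ofReal Cμ * μ (qball d x (2 ^ n * r)) := hdb.2 x _ (by positivity)
      _ ≤ ENNReal.ofReal Cμ * (ENNReal.ofReal (Cμ ^ n) * μ (qball d x r)) := by gcongr
      _ = ENNReal.ofReal (Cμ ^ (n + 1)) * μ (qball d x r) := by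
        rw [← mul_assoc, ← ENNReal.ofReal_mul hCμ, pow_succ']

lemma log_measure_qball_mul_le (hdb : IsDoubling d μ Cμ) (hb : BallsFinite d μ) (x : X)
    {r R : ℝ} (hr : 0 < r) (hR : 0 < R) :
    Real.log (μ (qball d x (R * r))).toReal ≤
      Real.log (μ (qball d x r)).toReal + Real.log Cμ * (1 + log⁺ R / Real.log 2) := by
  have hlog2 : 0 < Real.log 2 := Real.log_pos one_lt_two
  set m : ℕ := ⌈log⁺ R / Real.log 2⌉₊
  have hRm : R ≤ 2 ^ m := by
    rw [← Real.log_le_log_iff hR (by positivity), Real.log_pow]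
    calc Real.log R ≤ log⁺ R := le_max_right _ _
      _ = log⁺ R / Real.log 2 * Real.log 2 := by field_simp
      _ ≤ m * Real.log 2 := by gcongr; exact Nat.le_ceil _
  have hm : (m : ℝ) ≤ 1 + log⁺ R / Real.log 2 := by
    have := Nat.ceil_lt_add_one (div_nonneg Real.posLog_nonneg hlog2.le : 0 ≤ log⁺ R / Real.log 2)
    linarith
  obtain ⟨hpos, hfin⟩ := hb x r hr
  have hmeas : μ (qball d x (R * r)) ≤ ENNReal.ofReal (Cμ ^ m) * μ (qball d x r) :=
    (measure_mono (qball_subset_qball d x (by gcongr))).trans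
      (hdb.measure_qball_two_pow_mul_le x hr m)
  have hCμ : 0 < Cμ := zero_lt_one.trans_le hdb.1
  calc Real.log (μ (qball d x (R * r))).toReal
      ≤ Real.log (Cμ ^ m * (μ (qball d x r)).toReal) := by
        refine Real.log_le_log (ENNReal.toReal_pos (hb x _ (by positivity)).1.ne'
          (hb x _ (by positivity)).2.ne) ?_
        have := ENNReal.toReal_mono (ENNReal.mul_ne_top ENNReal.ofReal_ne_top hfin.ne) hmeas
        rwa [ENNReal.toReal_mul, ENNReal.toReal_ofReal (by positivity)] at this
    _ = Real.log (μ (qball d x r)).toReal + m * Real.log Cμ := by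
        rw [Real.log_mul (by positivity) (ENNReal.toReal_pos hpos.ne' hfin.ne).ne', Real.log_pow]
        ring
    _ ≤ Real.log (μ (qball d x r)).toReal + Real.log Cμ * (1 + log⁺ R / Real.log 2) := by
        rw [mul_comm]; gcongr; exact Real.log_nonneg hdb.1

end IsDoubling

lemma neg_log_measure_qball_le {X : Type*} [MeasurableSpace X] {d : X → X → ℝ}
    {μ : Measure X} {A₀ Cμ : ℝ} (hqm : IsQuasiMetric d A₀) (hdb : IsDoubling d μ Cμ)
    (hb : BallsFinite d μ) (x₀ c : X) {t : ℝ} (ht : 0 < t) :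
    -Real.log (μ (qball d c t)).toReal ≤ -Real.log (μ (qball d x₀ 1)).toReal
      + Real.log Cμ * (1 + log⁺ (A₀ * (d c x₀ + 1) / t) / Real.log 2) := by
  have hR : 0 < A₀ * (d c x₀ + 1) := by
    have := hqm.nonneg c x₀
    have := hqm.1
    positivity
  have hsub : μ (qball d x₀ 1) ≤ μ (qball d c (A₀ * (d c x₀ + 1) / t * t)) := by
    rw [div_mul_cancel₀ _ ht.ne']
    exact measure_mono (hqm.qball_one_subset x₀ c)
  have hlog : Real.log (μ (qball d x₀ 1)).toReal ≤
      Real.log (μ (qball d c (A₀ * (d c x₀ + 1) / t * t))).toReal := by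
    obtain ⟨hpos, hfin⟩ := hb x₀ 1 one_pos
    exact Real.log_le_log (ENNReal.toReal_pos hpos.ne' hfin.ne)
      (ENNReal.toReal_mono (hb c _ (by positivity)).2.ne hsub)
  linarith [hdb.log_measure_qball_mul_le hb c ht (div_pos hR ht)]

namespace LH0

variable {X : Type*} {d : X → X → ℝ} {r : X → ℝ} {C₀ : ℝ}

lemma abs_sub_le (h : LH0 d r C₀) {u v : X} (huv : 0 ≤ d u v) {ρ : ℝ} (hρ : ρ < 1 / 2)
    (hρuv : d u v ≤ ρ) : |r u - r v| ≤ |C₀| / -Real.log ρ := by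
  rcases huv.eq_or_lt with h0 | hpos
  · have := h u v (by linarith)
    rw [← h0, Real.log_zero, _root_.div_zero] at this
    exact this.trans (div_nonneg (abs_nonneg C₀)
      (neg_nonneg.mpr (Real.log_nonpos (huv.trans hρuv) (by linarith))))
  · have hlog : 0 < -Real.log (d u v) := neg_pos.mpr (Real.log_neg hpos (by linarith))
    calc |r u - r v| ≤ -C₀ / Real.log (d u v) := h u v (by linarith)
      _ = C₀ / -Real.log (d u v) := by rw [div_neg, neg_div]
      _ ≤ |C₀| / -Real.log (d u v) := by gcongr; exact le_abs_self C₀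
      _ ≤ |C₀| / -Real.log ρ := by
        gcongr
        exact neg_pos.mpr (Real.log_neg (hpos.trans_le hρuv) (by linarith))

lemma forall_pos_exists_pos_abs_sub_lt (h : LH0 d r C₀) (hd : ∀ x y, 0 ≤ d x y) (y : X) :
    ∀ η > 0, ∃ ρ > 0, ∀ z, d y z < ρ → |r y - r z| < η := by
  intro η hη
  set ρ := Real.exp (-(|C₀| / η) - 1)
  have hρ : ρ < 1 / 2 := by
    calc ρ ≤ Real.exp (-1) := Real.exp_le_exp.mpr (by linarith [div_nonneg (abs_nonneg C₀) hη.le])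
      _ < 1 / 2 := by
        rw [Real.exp_neg, inv_lt_comm₀ (Real.exp_pos 1) (by norm_num)]
        linarith [Real.add_one_lt_exp one_ne_zero]
  refine ⟨ρ, Real.exp_pos _, fun z hz => ?_⟩
  calc |r y - r z| ≤ |C₀| / -Real.log ρ := h.abs_sub_le (hd y z) hρ hz.le
    _ < η := by
      have hlogρ : -Real.log ρ = |C₀| / η + 1 := by rw [Real.log_exp]; ring
      rw [hlogρ, div_lt_iff₀ (by positivity), mul_add, mul_div_cancel₀ _ hη.ne']
      linarith

end LH0

lemma one_le_log_exp_one_add {s : ℝ} (hs : 0 ≤ s) : 1 ≤ Real.log (Real.exp 1 + s) := by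
  have := Real.log_le_log (Real.exp_pos 1) (le_add_of_nonneg_right hs)
  rwa [Real.log_exp] at this

lemma LHinf.abs_sub_le {X : Type*} {d : X → X → ℝ} {r : X → ℝ} {x₀ : X} {Cinf rinf : ℝ}
    (h : LHinf d r x₀ Cinf rinf) {s : ℝ} (hs : 0 ≤ s) {w : X} (hw : s ≤ d w x₀) :
    |r w - rinf| ≤ |Cinf| / Real.log (Real.exp 1 + s) := by
  have hlog := one_le_log_exp_one_add hs
  have hlogw := one_le_log_exp_one_add (hs.trans hw)
  calc |r w - rinf| ≤ Cinf / Real.log (Real.exp 1 + d w x₀) := h w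
    _ ≤ |Cinf| / Real.log (Real.exp 1 + d w x₀) := by gcongr; exact le_abs_self Cinf
    _ ≤ |Cinf| / Real.log (Real.exp 1 + s) := by gcongr

section EssBounds

variable {X : Type*} [MeasurableSpace X] {ν : Measure X} {p : X → ℝ≥0∞}

lemma ae_inv_essSup_toReal_le (hp : ∀ᵐ x ∂ν, p x ≠ 0) :
    ∀ᵐ x ∂ν, ((essSup p ν)⁻¹).toReal ≤ ((p x)⁻¹).toReal := by
  filter_upwards [ae_le_essSup p, hp] with x hx hpx
  exact ENNReal.toReal_mono (ENNReal.inv_ne_top.mpr hpx) (ENNReal.inv_le_inv.mpr hx)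

lemma ae_le_inv_essInf_toReal (hp : essInf p ν ≠ 0) :
    ∀ᵐ x ∂ν, ((p x)⁻¹).toReal ≤ ((essInf p ν)⁻¹).toReal := by
  filter_upwards [ae_essInf_le (f := p)] with x hx
  exact ENNReal.toReal_mono (ENNReal.inv_ne_top.mpr hp) (ENNReal.inv_le_inv.mpr hx)

lemma inv_essInf_toReal_le_of_ae_le (hν : ν ≠ 0) (hp : ∀ᵐ x ∂ν, p x ≠ 0) {s : ℝ}
    (h : ∀ᵐ x ∂ν, ((p x)⁻¹).toReal ≤ s) : ((essInf p ν)⁻¹).toReal ≤ s := by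
  have := ae_neBot.2 hν
  obtain ⟨x, hx⟩ := h.exists
  have hs : 0 ≤ s := ENNReal.toReal_nonneg.trans hx
  refine ENNReal.toReal_le_of_le_ofReal hs (ENNReal.inv_le_iff_inv_le.mpr ?_)
  refine le_essInf_of_ae_le _ ?_
  filter_upwards [h, hp] with x hx hpx
  exact ENNReal.inv_le_iff_inv_le.mpr
    ((ENNReal.le_ofReal_iff_toReal_le (ENNReal.inv_ne_top.mpr hpx) hs).mpr hx)

lemma le_inv_essSup_toReal_of_ae_le (hν : ν ≠ 0) (hp : ∀ᵐ x ∂ν, p x ≠ 0) {s : ℝ}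
    (h : ∀ᵐ x ∂ν, s ≤ ((p x)⁻¹).toReal) : s ≤ ((essSup p ν)⁻¹).toReal := by
  have := ae_neBot.2 hν
  obtain ⟨x, hx, hpx⟩ := ((ae_le_essSup p).and hp).exists
  have hsup : (essSup p ν)⁻¹ ≠ ⊤ := ENNReal.inv_ne_top.mpr (ne_bot_of_le_ne_bot hpx hx)
  refine (ENNReal.ofReal_le_iff_le_toReal hsup).mp (ENNReal.le_inv_iff_le_inv.mpr ?_)
  refine essSup_le_of_ae_le _ ?_
  filter_upwards [h, hp] with x hx hpx
  exact ENNReal.le_inv_iff_le_inv.mpr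
    ((ENNReal.ofReal_le_iff_le_toReal (ENNReal.inv_ne_top.mpr hpx)).mpr hx)

lemma inv_essInf_toReal_sub_inv_essSup_toReal_le (hν : ν ≠ 0) (hp : ∀ᵐ x ∂ν, p x ≠ 0)
    {m c : ℝ} (h : ∀ᵐ x ∂ν, |((p x)⁻¹).toReal - m| ≤ c) :
    ((essInf p ν)⁻¹).toReal - ((essSup p ν)⁻¹).toReal ≤ 2 * c := by
  have hb := inv_essInf_toReal_le_of_ae_le hν hp (s := m + c)
    (h.mono fun x hx => by linarith [(abs_le.mp hx).2])
  have ha := le_inv_essSup_toReal_of_ae_le hν hp (s := m - c)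
    (h.mono fun x hx => by linarith [(abs_le.mp hx).1])
  linarith

lemma inv_essSup_toReal_le_inv_essInf_toReal (hν : ν ≠ 0) (hp : ∀ᵐ x ∂ν, 1 ≤ p x) :
    ((essSup p ν)⁻¹).toReal ≤ ((essInf p ν)⁻¹).toReal := by
  have := ae_neBot.2 hν
  have hinf : essInf p ν ≠ 0 := (zero_lt_one.trans_le (le_essInf_of_ae_le 1 hp)).ne'
  obtain ⟨x, hax, hxb⟩ := ((ae_inv_essSup_toReal_le (hp.mono fun x hx =>
    (zero_lt_one.trans_le hx).ne')).and (ae_le_inv_essInf_toReal hinf)).exists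
  exact hax.trans hxb

lemma inv_essInf_toReal_le_one (hν : ν ≠ 0) (hp : ∀ᵐ x ∂ν, 1 ≤ p x) :
    ((essInf p ν)⁻¹).toReal ≤ 1 :=
  inv_essInf_toReal_le_of_ae_le hν (hp.mono fun x hx => (zero_lt_one.trans_le hx).ne')
    (hp.mono fun x hx => ENNReal.toReal_le_of_le_ofReal zero_le_one (by simpa using hx))

end EssBounds

lemma le_of_ae_le_of_measure_inter_qball_pos {X : Type*} [MeasurableSpace X]
    {d : X → X → ℝ} {μ : Measure X} {f : X → ℝ} {S : Set X} {y : X} {s : ℝ}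
    (hS : MeasurableSet S) (hf : ∀ η > 0, ∃ ρ > 0, ∀ z, d y z < ρ → |f y - f z| < η)
    (hpos : ∀ ρ > 0, 0 < μ (S ∩ qball d y ρ)) (hae : ∀ᵐ z ∂μ.restrict S, f z ≤ s) :
    f y ≤ s := by
  by_contra! hlt
  obtain ⟨ρ, hρ, hρf⟩ := hf (f y - s) (by linarith)
  rw [ae_restrict_iff' hS] at hae
  refine (hpos ρ hρ).ne' (measure_mono_null ?_ (ae_iff.mp hae))
  rintro z ⟨hzS, hzρ⟩ hz
  linarith [(abs_lt.mp (hρf z hzρ)).2, hz hzS]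

lemma measure_inter_qball_pos_of_mem_cube {X : Type*} [MeasurableSpace X] {d : X → X → ℝ}
    {μ : Measure X} {A₀ : ℝ} (hqm : IsQuasiMetric d A₀) (hb : BallsFinite d μ)
    {𝒟 : ℤ → Set (Set X)} {C δ : ℝ} {xc : Set X → X} (hC : 0 < C) (hδ0 : 0 < δ) (hδ1 : δ < 1)
    (hcover : ∀ k, ⋃₀ 𝒟 k = Set.univ)
    (hnest : ∀ k l, ∀ Q₁ ∈ 𝒟 k, ∀ Q₂ ∈ 𝒟 l, Q₁ ∩ Q₂ = ∅ ∨ Q₁ ⊆ Q₂ ∨ Q₂ ⊆ Q₁)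
    (hcube : ∀ k, ∀ Q ∈ 𝒟 k, qball d (xc Q) (δ ^ k) ⊆ Q ∧ Q ⊆ qball d (xc Q) (C * δ ^ k))
    {k : ℤ} {Q : Set X} (hQ : Q ∈ 𝒟 k) {y : X} (hy : y ∈ Q) {ρ : ℝ} (hρ : 0 < ρ) :
    0 < μ (Q ∩ qball d y ρ) := by
  have hcube_pos : ∀ l, ∀ Q ∈ 𝒟 l, 0 < μ Q := fun l Q hQ =>
    (hb _ _ (zpow_pos hδ0 l)).1.trans_le (measure_mono (hcube l Q hQ).1)
  have hA₀ : 0 < A₀ := zero_lt_one.trans_le hqm.1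
  obtain ⟨n, hn⟩ : ∃ n : ℕ, δ ^ n < ρ / (2 * A₀ * C) :=
    exists_pow_lt_of_lt_one (by positivity) hδ1
  obtain ⟨Q', hQ', hyQ'⟩ : ∃ Q' ∈ 𝒟 n, y ∈ Q' := by
    simp [← Set.mem_sUnion, hcover n]
  have hQ'ρ : Q' ⊆ qball d y ρ := fun z hz =>
    calc d y z < 2 * A₀ * (C * δ ^ (n : ℤ)) :=
          hqm.dist_lt_of_mem_qball ((hcube n Q' hQ').2 hyQ') ((hcube n Q' hQ').2 hz)
      _ = 2 * A₀ * C * δ ^ n := by rw [zpow_natCast]; ring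
      _ < ρ := (lt_div_iff₀' (by positivity)).mp hn
  refine lt_of_lt_of_le ?_ (measure_mono (Set.inter_subset_inter_right Q hQ'ρ))
  rcases hnest k n Q hQ Q' hQ' with hdisj | hsub | hsub
  · exact absurd (hdisj ▸ Set.mem_inter hy hyQ') (Set.notMem_empty y)
  · rw [Set.inter_eq_left.mpr hsub]
    exact hcube_pos k Q hQ
  · rw [Set.inter_eq_right.mpr hsub]
    exact hcube_pos n Q' hQ'

lemma mul_posLog_inv_le {W ρ K : ℝ} (hW1 : W ≤ 1) (hρ : 0 < ρ)
    (hK : ρ < 1 / 2 → W ≤ K / -Real.log ρ) : W * log⁺ ρ⁻¹ ≤ max K 1 := by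
  rcases lt_or_ge ρ (1 / 2) with hsmall | hlarge
  · have hlog : 0 < -Real.log ρ := neg_pos.mpr (Real.log_neg hρ (by linarith))
    have hρ1 : 1 ≤ |ρ⁻¹| := by
      rw [abs_inv, abs_of_pos hρ]
      exact (one_le_inv₀ hρ).mpr (by linarith)
    rw [Real.posLog_eq_log hρ1, Real.log_inv]
    calc W * -Real.log ρ ≤ K / -Real.log ρ * -Real.log ρ := by gcongr; exact hK hsmall
      _ = K := div_mul_cancel₀ _ hlog.ne'
      _ ≤ max K 1 := le_max_left _ _
  · have hlog : log⁺ ρ⁻¹ ≤ 1 := by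
      calc log⁺ ρ⁻¹ ≤ log⁺ 2 :=
            Real.posLog_le_posLog (by positivity) (by rw [inv_le_comm₀ hρ two_pos]; linarith)
        _ = Real.log 2 := Real.posLog_eq_log (by norm_num)
        _ ≤ 1 := by linarith [Real.log_two_lt_d9]
    calc W * log⁺ ρ⁻¹ ≤ 1 * 1 := by gcongr; exact Real.posLog_nonneg
      _ ≤ max K 1 := by simp

lemma log_one_add_le_mul_log_exp_add {A D : ℝ} (hA : 1 ≤ A) (hD : 0 ≤ D) :
    Real.log (1 + D) ≤ (Real.log A + 1) * Real.log (Real.exp 1 + D / A) := by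
  have hA0 : 0 < A := zero_lt_one.trans_le hA
  have he : 1 ≤ Real.exp 1 := Real.one_le_exp zero_le_one
  have hL := one_le_log_exp_one_add (div_nonneg hD hA0.le)
  have hlogA : 0 ≤ Real.log A := Real.log_nonneg hA
  calc Real.log (1 + D) ≤ Real.log (A * (Real.exp 1 + D / A)) := by
        refine Real.log_le_log (by linarith) ?_
        rw [mul_add, mul_div_cancel₀ _ hA0.ne']
        nlinarith
    _ = Real.log A + Real.log (Real.exp 1 + D / A) :=
        Real.log_mul hA0.ne' (by positivity)
    _ ≤ (Real.log A + 1) * Real.log (Real.exp 1 + D / A) := by nlinarith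

lemma mul_posLog_one_add_div_le {W ρ D A K₀ K : ℝ} (hW0 : 0 ≤ W) (hW1 : W ≤ 1) (hρ : 0 < ρ)
    (hD : 0 ≤ D) (hA : 1 ≤ A) (hK : 0 ≤ K) (h₀ : ρ < 1 / 2 → W ≤ K₀ / -Real.log ρ)
    (hfar : ρ ≤ D → W ≤ K / Real.log (Real.exp 1 + D / A)) :
    W * log⁺ ((1 + D) / ρ) ≤ Real.log 2 + max K₀ 1 + K * (Real.log A + 1) := by
  have hinv := mul_posLog_inv_le hW1 hρ h₀
  have hlog2 : 0 ≤ Real.log 2 := Real.log_nonneg one_le_two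
  have hKA : 0 ≤ K * (Real.log A + 1) := mul_nonneg hK (by linarith [Real.log_nonneg hA])
  rcases lt_or_ge D ρ with hnear | hfar'
  · have hsplit : log⁺ ((1 + D) / ρ) ≤ Real.log 2 + log⁺ ρ⁻¹ := by
      calc log⁺ ((1 + D) / ρ) ≤ log⁺ (1 + ρ⁻¹) := by
            refine Real.posLog_le_posLog (by positivity) ?_
            calc (1 + D) / ρ = D / ρ + ρ⁻¹ := by ring
              _ ≤ 1 + ρ⁻¹ := by gcongr; exact (div_le_one hρ).mpr hnear.le
        _ ≤ Real.log 2 + log⁺ 1 + log⁺ ρ⁻¹ := Real.posLog_add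
        _ = Real.log 2 + log⁺ ρ⁻¹ := by simp [Real.posLog]
    calc W * log⁺ ((1 + D) / ρ) ≤ W * Real.log 2 + W * log⁺ ρ⁻¹ := by
          rw [← mul_add]; gcongr
      _ ≤ 1 * Real.log 2 + max K₀ 1 := by gcongr
      _ ≤ _ := by linarith
  · have hL := one_le_log_exp_one_add (div_nonneg hD (zero_le_one.trans hA))
    have hsplit : log⁺ ((1 + D) / ρ) ≤ Real.log (1 + D) + log⁺ ρ⁻¹ := by
      calc log⁺ ((1 + D) / ρ) ≤ log⁺ (1 + D) + log⁺ ρ⁻¹ := Real.posLog_mul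
        _ = Real.log (1 + D) + log⁺ ρ⁻¹ := by
          rw [Real.posLog_eq_log (by rw [abs_of_nonneg (by linarith)]; linarith)]
    have hfarW : W * Real.log (1 + D) ≤ K * (Real.log A + 1) :=
      calc W * Real.log (1 + D)
          ≤ K / Real.log (Real.exp 1 + D / A)
            * ((Real.log A + 1) * Real.log (Real.exp 1 + D / A)) :=
            mul_le_mul (hfar hfar') (log_one_add_le_mul_log_exp_add hA hD)
              (Real.log_nonneg (by linarith)) (div_nonneg hK (by linarith))
        _ = K * (Real.log A + 1) := by
          rw [div_mul_comm, mul_div_assoc, div_self (by linarith), mul_one, mul_comm]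
    calc W * log⁺ ((1 + D) / ρ) ≤ W * Real.log (1 + D) + W * log⁺ ρ⁻¹ := by
          rw [← mul_add]; gcongr
      _ ≤ K * (Real.log A + 1) + max K₀ 1 := add_le_add hfarW hinv
      _ ≤ _ := by linarith

lemma rpow_le_ofReal_exp_of_mul_neg_log_le {m : ℝ≥0∞} (hm0 : 0 < m) (hm : m < ⊤)
    {W κ e : ℝ} (hκ : 0 ≤ κ) (hWκ : W * -Real.log m.toReal ≤ κ) (he : -W ≤ e) (he0 : e ≤ 0) :
    m ^ e ≤ ENNReal.ofReal (Real.exp κ) := by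
  have hq : 0 < m.toReal := ENNReal.toReal_pos hm0.ne' hm.ne
  rw [← ENNReal.ofReal_toReal hm.ne, ENNReal.ofReal_rpow_of_pos hq]
  refine ENNReal.ofReal_le_ofReal ?_
  rcases le_or_gt 1 m.toReal with h1 | h1
  · exact (Real.rpow_le_one_of_one_le_of_nonpos h1 he0).trans (Real.one_le_exp hκ)
  · calc m.toReal ^ e ≤ m.toReal ^ (-W) := Real.rpow_le_rpow_of_exponent_ge hq h1.le he
      _ = Real.exp (W * -Real.log m.toReal) := by rw [Real.rpow_def_of_pos hq]; ring_nf
      _ ≤ Real.exp κ := Real.exp_le_exp.mpr hWκ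

noncomputable def cubeExponentConst (A₀ Cμ C C₀ Cinf M : ℝ) : ℝ :=
  |Real.log M| + Real.log Cμ + Real.log Cμ / Real.log 2 *
    (log⁺ (2 * A₀ ^ 2 * C) + (Real.log 2 + max (2 * |C₀|) 1
      + 2 * |Cinf| * (Real.log (2 * A₀) + 1)))

lemma cubeExponentConst_nonneg {A₀ Cμ : ℝ} (hA₀ : 1 ≤ A₀) (hCμ : 1 ≤ Cμ) (C C₀ Cinf M : ℝ) :
    0 ≤ cubeExponentConst A₀ Cμ C C₀ Cinf M := by
  have hlogCμ := Real.log_nonneg hCμ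
  have hlogA₀ := Real.log_nonneg (show 1 ≤ 2 * A₀ by linarith)
  have hlog2 := Real.log_nonneg one_le_two
  have hinner : 0 ≤ log⁺ (2 * A₀ ^ 2 * C) + (Real.log 2 + max (2 * |C₀|) 1
      + 2 * |Cinf| * (Real.log (2 * A₀) + 1)) := by
    have := Real.posLog_nonneg (x := 2 * A₀ ^ 2 * C)
    have := le_max_right (2 * |C₀|) 1
    have := mul_nonneg (mul_nonneg zero_le_two (abs_nonneg Cinf))
      (by linarith : 0 ≤ Real.log (2 * A₀) + 1)
    linarith
  have := mul_nonneg (div_nonneg hlogCμ hlog2) hinner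
  unfold cubeExponentConst
  linarith [abs_nonneg (Real.log M)]

section Cubes

variable {X : Type*} [MeasurableSpace X] {d : X → X → ℝ} {μ : Measure X} {A₀ Cμ : ℝ}
  {p : X → ℝ≥0∞} {C₀ : ℝ} {x₀ : X} {Cinf pinf : ℝ} {Q : Set X} {c : X}

lemma inv_essInf_sub_inv_essSup_mul_posLog_le (hqm : IsQuasiMetric d A₀) (hp : ∀ x, 1 ≤ p x)
    (hLH0 : LH0 d (fun x => ((p x)⁻¹).toReal) C₀)
    (hLHinf : LHinf d (fun x => ((p x)⁻¹).toReal) x₀ Cinf pinf)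
    (hQm : MeasurableSet Q) (hQ : μ Q ≠ 0) (hcQ : c ∈ Q) {R : ℝ} (hR : 0 < R)
    (hout : Q ⊆ qball d c R) :
    (((essInf p (μ.restrict Q))⁻¹).toReal - ((essSup p (μ.restrict Q))⁻¹).toReal)
        * log⁺ ((1 + d c x₀) / (2 * A₀ * R))
      ≤ Real.log 2 + max (2 * |C₀|) 1 + 2 * |Cinf| * (Real.log (2 * A₀) + 1) := by
  have hA₀ := hqm.1
  have hν : μ.restrict Q ≠ 0 := by rwa [Ne, Measure.restrict_eq_zero]
  have hpν : ∀ᵐ x ∂μ.restrict Q, 1 ≤ p x := ae_of_all _ hp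
  have hosc : ∀ m c', (∀ x ∈ Q, |((p x)⁻¹).toReal - m| ≤ c') →
      ((essInf p (μ.restrict Q))⁻¹).toReal - ((essSup p (μ.restrict Q))⁻¹).toReal ≤ 2 * c' :=
    fun m c' h => inv_essInf_toReal_sub_inv_essSup_toReal_le hν
      (hpν.mono fun x hx => (zero_lt_one.trans_le hx).ne')
      ((ae_restrict_iff' hQm).mpr (ae_of_all _ h))
  refine mul_posLog_one_add_div_le (A := 2 * A₀)
    (sub_nonneg.mpr (inv_essSup_toReal_le_inv_essInf_toReal hν hpν))
    (by linarith [inv_essInf_toReal_le_one hν hpν,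
      ENNReal.toReal_nonneg (a := (essSup p (μ.restrict Q))⁻¹)])
    (by positivity) (hqm.nonneg c x₀) (by linarith) (by positivity) (fun hρ => ?_) (fun hfar => ?_)
  · rw [mul_div_assoc]
    exact hosc _ _ fun x hx =>
      hLH0.abs_sub_le (hqm.nonneg x c) hρ (hqm.dist_lt_of_mem_qball (hout hx) (hout hcQ)).le
  · rw [mul_div_assoc]
    exact hosc pinf _ fun x hx => hLHinf.abs_sub_le (div_nonneg (hqm.nonneg c x₀) (by linarith))
      (hqm.div_le_dist_of_subset_qball x₀ hout hfar hx)

lemma inv_essInf_sub_inv_essSup_mul_neg_log_measure_le (hqm : IsQuasiMetric d A₀)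
    (hdb : IsDoubling d μ Cμ) (hb : BallsFinite d μ) (hp : ∀ x, 1 ≤ p x)
    (hLH0 : LH0 d (fun x => ((p x)⁻¹).toReal) C₀)
    (hLHinf : LHinf d (fun x => ((p x)⁻¹).toReal) x₀ Cinf pinf)
    (hQm : MeasurableSet Q) {C t : ℝ} (hC : 0 < C) (ht : 0 < t) (hin : qball d c t ⊆ Q)
    (hout : Q ⊆ qball d c (C * t)) :
    (((essInf p (μ.restrict Q))⁻¹).toReal - ((essSup p (μ.restrict Q))⁻¹).toReal)
        * -Real.log (μ Q).toReal
      ≤ cubeExponentConst A₀ Cμ C C₀ Cinf (μ (qball d x₀ 1)).toReal := by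
  set W := ((essInf p (μ.restrict Q))⁻¹).toReal - ((essSup p (μ.restrict Q))⁻¹).toReal
  set D := d c x₀
  have hA₀ : 0 < A₀ := zero_lt_one.trans_le hqm.1
  have hμQ : 0 < μ Q := (hb c t ht).1.trans_le (measure_mono hin)
  have hμQ' : μ Q < ⊤ := (measure_mono hout).trans_lt (hb c _ (by positivity)).2
  have hν : μ.restrict Q ≠ 0 := by rw [Ne, Measure.restrict_eq_zero]; exact hμQ.ne'
  have hpν : ∀ᵐ x ∂μ.restrict Q, 1 ≤ p x := ae_of_all _ hp
  have hW0 : 0 ≤ W := sub_nonneg.mpr (inv_essSup_toReal_le_inv_essInf_toReal hν hpν)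
  have hW1 : W ≤ 1 := by
    linarith [inv_essInf_toReal_le_one hν hpν,
      ENNReal.toReal_nonneg (a := (essSup p (μ.restrict Q))⁻¹)]
  have hosc := inv_essInf_sub_inv_essSup_mul_posLog_le hqm hp hLH0 hLHinf hQm hμQ.ne'
    (hin (hqm.mem_qball_self c ht)) (by positivity) hout
  have hmass : -Real.log (μ Q).toReal ≤ -Real.log (μ (qball d x₀ 1)).toReal
      + Real.log Cμ * (1 + log⁺ (A₀ * (D + 1) / t) / Real.log 2) :=
    (neg_le_neg (Real.log_le_log (ENNReal.toReal_pos (hb c t ht).1.ne' (hb c t ht).2.ne)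
      (ENNReal.toReal_mono hμQ'.ne (measure_mono hin)))).trans
      (neg_log_measure_qball_le hqm hdb hb x₀ c ht)
  have hsplit : log⁺ (A₀ * (D + 1) / t)
      ≤ log⁺ (2 * A₀ ^ 2 * C) + log⁺ ((1 + D) / (2 * A₀ * (C * t))) := by
    calc log⁺ (A₀ * (D + 1) / t) = log⁺ (2 * A₀ ^ 2 * C * ((1 + D) / (2 * A₀ * (C * t)))) := by
          congr 1; field_simp; ring
      _ ≤ _ := Real.posLog_mul
  have hlogCμ := Real.log_nonneg hdb.1
  calc W * -Real.log (μ Q).toReal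
      ≤ W * (-Real.log (μ (qball d x₀ 1)).toReal
          + Real.log Cμ * (1 + log⁺ (A₀ * (D + 1) / t) / Real.log 2)) :=
        mul_le_mul_of_nonneg_left hmass hW0
    _ = W * (-Real.log (μ (qball d x₀ 1)).toReal + Real.log Cμ)
          + Real.log Cμ / Real.log 2 * (W * log⁺ (A₀ * (D + 1) / t)) := by ring
    _ ≤ (|Real.log (μ (qball d x₀ 1)).toReal| + Real.log Cμ)
          + Real.log Cμ / Real.log 2 * (log⁺ (2 * A₀ ^ 2 * C)
            + W * log⁺ ((1 + D) / (2 * A₀ * (C * t)))) := by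
        gcongr ?_ + _ * ?_
        · calc _ ≤ W * (|Real.log (μ (qball d x₀ 1)).toReal| + Real.log Cμ) := by
                gcongr; exact neg_le_abs _
            _ ≤ _ := mul_le_of_le_one_left (by positivity) hW1
        · calc _ ≤ W * (log⁺ (2 * A₀ ^ 2 * C) + log⁺ ((1 + D) / (2 * A₀ * (C * t)))) := by
                gcongr
            _ ≤ _ := by
                rw [mul_add]; gcongr; exact mul_le_of_le_one_left Real.posLog_nonneg hW1
    _ ≤ cubeExponentConst A₀ Cμ C C₀ Cinf (μ (qball d x₀ 1)).toReal := by
        unfold cubeExponentConst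
        gcongr

lemma measure_rpow_le_exp_cubeExponentConst (hqm : IsQuasiMetric d A₀)
    (hdb : IsDoubling d μ Cμ) (hb : BallsFinite d μ) (hp : ∀ x, 1 ≤ p x)
    (hLH0 : LH0 d (fun x => ((p x)⁻¹).toReal) C₀)
    (hLHinf : LHinf d (fun x => ((p x)⁻¹).toReal) x₀ Cinf pinf)
    (hQm : MeasurableSet Q) {C t : ℝ} (hC : 0 < C) (ht : 0 < t) (hin : qball d c t ⊆ Q)
    (hout : Q ⊆ qball d c (C * t)) {e : ℝ}
    (he : ((essSup p (μ.restrict Q))⁻¹).toReal - ((essInf p (μ.restrict Q))⁻¹).toReal ≤ e)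
    (he0 : e ≤ 0) :
    μ Q ^ e ≤ ENNReal.ofReal
      (Real.exp (cubeExponentConst A₀ Cμ C C₀ Cinf (μ (qball d x₀ 1)).toReal)) :=
  rpow_le_ofReal_exp_of_mul_neg_log_le ((hb c t ht).1.trans_le (measure_mono hin))
    ((measure_mono hout).trans_lt (hb c _ (mul_pos hC ht)).2)
    (cubeExponentConst_nonneg hqm.1 hdb.1 _ _ _ _)
    (inv_essInf_sub_inv_essSup_mul_neg_log_measure_le hqm hdb hb hp hLH0 hLHinf hQm hC ht hin hout)
    (by linarith) he0

end Cubes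

lemma inv_toReal_mem_Icc_of_measure_inter_qball_pos {X : Type*} [MeasurableSpace X]
    {d : X → X → ℝ} {μ : Measure X} {p : X → ℝ≥0∞} {C₀ : ℝ} (hp : ∀ x, 1 ≤ p x)
    (hd : ∀ x y, 0 ≤ d x y) (hLH0 : LH0 d (fun x => ((p x)⁻¹).toReal) C₀) {Q : Set X}
    (hQm : MeasurableSet Q) {y : X} (hy : ∀ ρ > 0, 0 < μ (Q ∩ qball d y ρ)) :
    ((p y)⁻¹).toReal ∈ Set.Icc ((essSup p (μ.restrict Q))⁻¹).toReal
      ((essInf p (μ.restrict Q))⁻¹).toReal := by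
  have hcont := hLH0.forall_pos_exists_pos_abs_sub_lt hd y
  have hp0 : ∀ᵐ x ∂μ.restrict Q, p x ≠ 0 := ae_of_all _ fun x => (zero_lt_one.trans_le (hp x)).ne'
  constructor
  · have := le_of_ae_le_of_measure_inter_qball_pos (f := fun x => -((p x)⁻¹).toReal) hQm
      (fun η hη => (hcont η hη).imp fun ρ ⟨hρ, h⟩ =>
        ⟨hρ, fun z hz => by rw [neg_sub_neg, abs_sub_comm]; exact h z hz⟩)
      hy ((ae_inv_essSup_toReal_le hp0).mono fun x hx => neg_le_neg hx)
    exact neg_le_neg_iff.mp this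
  · have hinf : essInf p (μ.restrict Q) ≠ 0 :=
      (zero_lt_one.trans_le (le_essInf_of_ae_le 1 (ae_of_all _ hp))).ne'
    exact le_of_ae_le_of_measure_inter_qball_pos (f := fun x => ((p x)⁻¹).toReal) hQm hcont hy
      (ae_le_inv_essInf_toReal hinf)

/-- Diening-type estimates on dyadic cubes for a log-Hölder continuous exponent. -/
theorem stmt14 {X : Type*} [MeasurableSpace X] (d : X → X → ℝ) (μ : MeasureTheory.Measure X)
    (A₀ Cμ : ℝ) (hqm : IsQuasiMetric d A₀) (hdb : IsDoubling d μ Cμ) (hb : BallsFinite d μ)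
    (p : X → ℝ≥0∞) (hp : ∀ x, 1 ≤ p x)
    (C₀ : ℝ) (hLH0 : LH0 d (fun x => ((p x)⁻¹).toReal) C₀)
    (x₀ : X) (Cinf pinf : ℝ) (hLHinf : LHinf d (fun x => ((p x)⁻¹).toReal) x₀ Cinf pinf)
    (𝒟 : ℤ → Set (Set X)) (h𝒟 : IsDyadicGrid d μ 𝒟) :
    ∃ C : ℝ, 0 < C ∧ ∀ (k : ℤ), ∀ Q ∈ 𝒟 k,
      (μ Q ^ (((essSup p (μ.restrict Q))⁻¹).toReal
          - ((essInf p (μ.restrict Q))⁻¹).toReal) ≤ ENNReal.ofReal C) ∧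
      ∀ y ∈ Q,
        μ Q ^ (((p y)⁻¹).toReal - ((essInf p (μ.restrict Q))⁻¹).toReal) ≤ ENNReal.ofReal C ∧
        μ Q ^ (((essSup p (μ.restrict Q))⁻¹).toReal - ((p y)⁻¹).toReal) ≤ ENNReal.ofReal C := by
  obtain ⟨C, δ, -, xc, hC, hδ0, hδ1, -, -, hcover, hnest, -, -, -, hcube⟩ := h𝒟
  refine ⟨_, Real.exp_pos (cubeExponentConst A₀ Cμ C C₀ Cinf (μ (qball d x₀ 1)).toReal),
    fun k Q hQ => ?_⟩
  obtain ⟨hQm, hin, hout⟩ := hcube k Q hQ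
  have ht : 0 < δ ^ k := zpow_pos hδ0 k
  have hmem : ∀ y ∈ Q, ((p y)⁻¹).toReal ∈ Set.Icc ((essSup p (μ.restrict Q))⁻¹).toReal
      ((essInf p (μ.restrict Q))⁻¹).toReal := fun y hy =>
    inv_toReal_mem_Icc_of_measure_inter_qball_pos hp hqm.nonneg hLH0 hQm fun ρ hρ =>
      measure_inter_qball_pos_of_mem_cube hqm hb hC hδ0 hδ1 (fun k => (hcover k).2) hnest
        (fun k Q hQ => (hcube k Q hQ).2) hQ hy hρ
  have hbound := fun e => measure_rpow_le_exp_cubeExponentConst (e := e) hqm hdb hb hp hLH0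
    hLHinf hQm hC ht hin hout
  have hcenter := hmem _ (hin (hqm.mem_qball_self (xc Q) ht))
  refine ⟨hbound _ le_rfl (by linarith [hcenter.1, hcenter.2]), fun y hy => ?_⟩
  obtain ⟨hay, hyb⟩ := hmem y hy
  exact ⟨hbound _ (by linarith) (by linarith), hbound _ (by linarith) (by linarith)⟩
end
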